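/- arXiv:1505.00508 — 2 statements merged into one kernel-verified Lean document; each statement's English description precedes it below -/
import Mathlib

section
/- If there exists an ε-approximate virtual valuation function for the observed data, then every cycle in the bidding graph G has mean length at least −ε. -/
open Finset

/-- Euclidean inner product on `ℝⁿ`. -/
def dotp {n : ℕ} (p y : Fin n → ℝ) : ℝ := ∑ i, p i * y i

/-- A bundle is a 0-1 vector. -/
def IsBundle {n : ℕ} (y : Fin n → ℝ) : Prop := ∀ i, y i = 0 ∨ y i = 1

/-- The cyclically next index in `Fin m`. -/
def cnext {m : ℕ} (i : Fin m) : Fin m := ⟨(i.val + 1) % m, Nat.mod_lt _ i.pos⟩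

-- The length of the arc of the bidding graph from bid bundle `x t` to bundle `y`:
-- the minimum of `p s · (y - x t)` over all observations `s` bidding the same bundle as `t`.
open Classical in
noncomputable def arcLen {n T : ℕ} (p x : Fin T → Fin n → ℝ) (t : Fin T)
    (y : Fin n → ℝ) : ℝ :=
  (Finset.univ.filter fun s => x s = x t).inf' ⟨t, by simp⟩
    (fun s => dotp (p s) (y - x t))

/-- `v` is an `ε`-approximate virtual valuation function for the data `(p, x)`. -/
def IsApproxVV  {n T : ℕ} (p x : Fin T → Fin n → ℝ) (ε : ℝ)
    (v : (Fin n → ℝ) → ℝ) : Prop :=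
  ∀ t : Fin T, ∀ y : Fin n → ℝ, IsBundle y →
    v (x t) - dotp (p t) (x t) ≥ v y - dotp (p t) y - ε

/-- `v` is individually rational for the data `(p, x)`. -/
def IndivRational {n T : ℕ} (p x : Fin T → Fin n → ℝ)
    (v : (Fin n → ℝ) → ℝ) : Prop :=
  ∀ t : Fin T, v (x t) ≥ dotp (p t) (x t)

/-- The set of mean lengths of cycles of the bidding graph. -/
noncomputable def meanCycleLens {n T : ℕ} (p x : Fin T → Fin n → ℝ) : Set ℝ :=
  {r | ∃ m : ℕ, 2 ≤ m ∧ ∃ c : Fin m → Fin T,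
      Function.Injective (fun i => x (c i)) ∧
      r = (∑ i : Fin m, arcLen p x (c i) (x (c (cnext i)))) / m}
/-! An `ε`-approximate virtual valuation `v` bounds every arc of the bidding graph from below:
`ℓ(x_t, y) ≥ v y - v (x_t) - ε`, by the defining inequality at each observation that bids `x_t`.
Summed around a cycle, the differences of `v` telescope away, leaving `-ε` per arc. -/

theorem cnext_injective {m : ℕ} : Function.Injective (cnext : Fin m → Fin m) := by
  intro i j hij
  have hmod : i.val + 1 ≡ j.val + 1 [MOD m] := congrArg Fin.val hij
  exact Fin.ext ((hmod.add_right_cancel' 1).eq_of_lt_of_lt i.isLt j.isLt)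

theorem sum_comp_cnext {m : ℕ} {M : Type*} [AddCommMonoid M] (f : Fin m → M) :
    ∑ i, f (cnext i) = ∑ i, f i :=
  Fintype.sum_bijective cnext cnext_injective.bijective_of_finite _ _ fun _ => rfl

theorem sum_sub_comp_cnext {m : ℕ} {G : Type*} [AddCommGroup G] (f : Fin m → G) :
    ∑ i, (f (cnext i) - f i) = 0 := by
  rw [Finset.sum_sub_distrib, sum_comp_cnext, sub_self]

theorem dotp_sub {n : ℕ} (p y z : Fin n → ℝ) : dotp p (y - z) = dotp p y - dotp p z := by
  simp only [dotp, Pi.sub_apply, mul_sub, Finset.sum_sub_distrib]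

theorem IsApproxVV.sub_le_arcLen {n T : ℕ} {p x : Fin T → Fin n → ℝ} {ε : ℝ}
    {v : (Fin n → ℝ) → ℝ} (hv : IsApproxVV p x ε v) (t : Fin T) {y : Fin n → ℝ}
    (hy : IsBundle y) : v y - v (x t) - ε ≤ arcLen p x t y := by
  classical
  refine Finset.le_inf' _ _ fun s hs => ?_
  have hst : x s = x t := (Finset.mem_filter.mp hs).2
  have hvs := hv s y hy
  rw [hst] at hvs
  rw [dotp_sub]
  linarith

theorem minMeanCycle_of_exists_approxVV_general {n T : ℕ}
    (p x : Fin T → Fin n → ℝ)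
    (hx : ∀ t, IsBundle (x t)) (ε : ℝ)
    (hv : ∃ v : (Fin n → ℝ) → ℝ, IsApproxVV p x ε v) :
    ∀ m : ℕ, 2 ≤ m → ∀ c : Fin m → Fin T,
      Function.Injective (fun i => x (c i)) →
      -ε ≤ (∑ i : Fin m, arcLen p x (c i) (x (c (cnext i)))) / m := by
  obtain ⟨v, hv⟩ := hv
  intro m hm c _
  rw [le_div_iff₀ (Nat.cast_pos.mpr (by omega))]
  calc -ε * m = ∑ i : Fin m, ((v (x (c (cnext i))) - v (x (c i))) - ε) := by
        rw [Finset.sum_sub_distrib, sum_sub_comp_cnext (fun i => v (x (c i)))]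
        simp [mul_comm]
    _ ≤ ∑ i : Fin m, arcLen p x (c i) (x (c (cnext i))) :=
        Finset.sum_le_sum fun i _ => hv.sub_le_arcLen (c i) (hx _)

/-- If an `ε`-approximate virtual valuation function exists, then every
cycle of the bidding graph has mean length at least `-ε`. -/
theorem minMeanCycle_of_exists_approxVV {n T : ℕ}
    (p x : Fin T → Fin n → ℝ)
    (hp : ∀ t i, 0 ≤ p t i) (hx : ∀ t, IsBundle (x t)) (ε : ℝ)
    (hv : ∃ v : (Fin n → ℝ) → ℝ, IsApproxVV p x ε v) :
    ∀ m : ℕ, 2 ≤ m → ∀ c : Fin m → Fin T,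
      Function.Injective (fun i => x (c i)) →
      -ε ≤ (∑ i : Fin m, arcLen p x (c i) (x (c (cnext i)))) / m :=
  minMeanCycle_of_exists_approxVV_general p x hx ε hv
end

section
/- Let ε ∈ ℝ and let k ≥ 1 be an integer. Every cycle in the bidding graph G of cardinality at most k+1 has mean length at least −ε if and only if the relaxed KARP-based bidding rule holds: for every κ with 1 ≤ κ ≤ k and every sequence of observation indices t_0, t_1, …, t_κ whose bid bundles are pairwise distinct, (p_{t_κ} − p_{t_0})·x_{t_0} ≥ Σ_{i=1}^{κ} (p_{t_i} − p_{t_{i−1}})·x_{t_i} − (κ+1)·ε. -/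
open Finset

/-!
Along a cycle of observations `t₀, …, t_κ`, the sum `Σ p_{tᵢ}·(x_{tᵢ₊₁} − x_{tᵢ})` is, after
reindexing, exactly the KARP difference `(p_{t_κ} − p_{t₀})·x_{t₀} − Σ (p_{tᵢ} − p_{tᵢ₋₁})·x_{tᵢ}`.
The length of a cycle of the bidding graph is the minimum of these sums over all choices of
observations bidding the given bundles, since each arc length is a minimum attained at such an
observation. Hence all short cycles are long enough iff all these sums are, which is the rule.
-/

lemma dotp_sub_right {n : ℕ} (p a b : Fin n → ℝ) : dotp p (a - b) = dotp p a - dotp p b := by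
  simp [dotp, mul_sub, sum_sub_distrib]

lemma dotp_sub_left {n : ℕ} (p q a : Fin n → ℝ) : dotp (p - q) a = dotp p a - dotp q a := by
  simp [dotp, sub_mul, sum_sub_distrib]

lemma cnext_castSucc {m : ℕ} (j : Fin m) : cnext j.castSucc = j.succ := by
  ext
  simp [cnext, Nat.mod_eq_of_lt (by omega : j.val + 1 < m + 1)]

lemma cnext_last (m : ℕ) : cnext (Fin.last m) = 0 := by
  ext
  simp [cnext]

lemma sum_dotp_cnext_sub {n κ : ℕ} (P X : Fin (κ + 1) → Fin n → ℝ) :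
    ∑ i, dotp (P i) (X (cnext i) - X i)
      = dotp (P (Fin.last κ) - P 0) (X 0) - ∑ i : Fin κ, dotp (P i.succ - P i.castSucc) (X i.succ) := by
  simp only [dotp_sub_right, dotp_sub_left, sum_sub_distrib]
  rw [Fin.sum_univ_castSucc (f := fun i => dotp (P i) (X (cnext i))),
    Fin.sum_univ_succ (f := fun i => dotp (P i) (X i))]
  simp only [cnext_castSucc, cnext_last]
  ring

section arcLen

variable {n T : ℕ} (p x : Fin T → Fin n → ℝ)

lemma arcLen_le (t : Fin T) (y : Fin n → ℝ) : arcLen p x t y ≤ dotp (p t) (y - x t) := by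
  classical
  exact inf'_le _ (by simp)

lemma exists_arcLen_eq (t : Fin T) (y : Fin n → ℝ) :
    ∃ s, x s = x t ∧ arcLen p x t y = dotp (p s) (y - x t) := by
  classical
  obtain ⟨s, hs, h⟩ := exists_mem_eq_inf' (s := univ.filter fun s => x s = x t) ⟨t, by simp⟩
    (fun s => dotp (p s) (y - x t))
  exact ⟨s, (mem_filter.mp hs).2, h⟩

lemma sum_arcLen_le {m : ℕ} (c : Fin m → Fin T) :
    ∑ i, arcLen p x (c i) (x (c (cnext i))) ≤ ∑ i, dotp (p (c i)) (x (c (cnext i)) - x (c i)) :=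
  sum_le_sum fun i _ => arcLen_le p x (c i) _

lemma exists_sum_arcLen_eq {m : ℕ} (c : Fin m → Fin T) :
    ∃ s : Fin m → Fin T, (∀ i, x (s i) = x (c i)) ∧
      ∑ i, arcLen p x (c i) (x (c (cnext i))) = ∑ i, dotp (p (s i)) (x (s (cnext i)) - x (s i)) := by
  choose s hs hlen using fun i => exists_arcLen_eq p x (c i) (x (c (cnext i)))
  exact ⟨s, hs, sum_congr rfl fun i _ => by rw [hlen, hs, hs]⟩

end arcLen

theorem short_cycles_iff_relaxed_karp_general {n T : ℕ}
    (p x : Fin T → Fin n → ℝ)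
    (ε : ℝ) (k : ℕ) :
    (∀ m : ℕ, 2 ≤ m → m ≤ k + 1 → ∀ c : Fin m → Fin T,
      Function.Injective (fun i => x (c i)) →
      -ε ≤ (∑ i : Fin m, arcLen p x (c i) (x (c (cnext i)))) / m)
    ↔
    (∀ κ : ℕ, 1 ≤ κ → κ ≤ k → ∀ t : Fin (κ + 1) → Fin T,
      Function.Injective (fun i => x (t i)) →
      dotp (p (t (Fin.last κ)) - p (t 0)) (x (t 0)) ≥
        (∑ i : Fin κ, dotp (p (t i.succ) - p (t i.castSucc)) (x (t i.succ)))
          - (κ + 1) * ε) := by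
  constructor
  · intro h κ hκ hκk t ht
    have hcycle := (le_div_iff₀ (by positivity)).mp (h (κ + 1) (by omega) (by omega) t ht)
    have hle := sum_arcLen_le p x t
    rw [sum_dotp_cnext_sub (fun i => p (t i)) (fun i => x (t i))] at hle
    push_cast at hcycle
    linarith
  · intro h m hm hmk c hc
    obtain ⟨κ, rfl⟩ : ∃ κ, m = κ + 1 := ⟨m - 1, by omega⟩
    obtain ⟨s, hs, hsum⟩ := exists_sum_arcLen_eq p x c
    have hkarp := h κ (by omega) (by omega) s (by simpa only [hs] using hc)
    rw [hsum, sum_dotp_cnext_sub (fun i => p (s i)) (fun i => x (s i)), le_div_iff₀ (by positivity)]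
    push_cast
    linarith

/-- Every cycle of the bidding graph of cardinality at most `k+1` has mean
length at least `-ε` if and only if the relaxed KARP-based bidding rule holds. -/
theorem short_cycles_iff_relaxed_karp {n T : ℕ}
    (p x : Fin T → Fin n → ℝ)
    (hp : ∀ t i, 0 ≤ p t i) (hx : ∀ t, IsBundle (x t))
    (ε : ℝ) (k : ℕ) (hk : 1 ≤ k) :
    (∀ m : ℕ, 2 ≤ m → m ≤ k + 1 → ∀ c : Fin m → Fin T,
      Function.Injective (fun i => x (c i)) →
      -ε ≤ (∑ i : Fin m, arcLen p x (c i) (x (c (cnext i)))) / m)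
    ↔
    (∀ κ : ℕ, 1 ≤ κ → κ ≤ k → ∀ t : Fin (κ + 1) → Fin T,
      Function.Injective (fun i => x (t i)) →
      dotp (p (t (Fin.last κ)) - p (t 0)) (x (t 0)) ≥
        (∑ i : Fin κ, dotp (p (t i.succ) - p (t i.castSucc)) (x (t i.succ)))
          - (κ + 1) * ε) :=
  short_cycles_iff_relaxed_karp_general p x ε k
end
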